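/- arXiv:2307.00542 — 5 statements merged into one kernel-verified Lean document; each statement's English description precedes it below -/
import Mathlib

section
/- Let ξ(x) = 1 − √(1 − x). For every n ∈ ℕ with n ≥ 1 and every x ∈ [0, 1], the series Σ_{p=0}^∞ α_p^{(n)} x^p converges and equals (1 − √(1 − x))^n, where α_p^{(n)} = 0 for p < n and α_p^{(n)} = (n/(2p)) · 2^{n+1−2p} · C(2p − n − 1, p − 1) for p ≥ n (here C(·,·) denotes the binomial coefficient). -/
/-!
Since `ξ = 1 - √(1 - x)` satisfies `ξ² = 2ξ - x`, the powers obey `ξ^(n+2) = 2ξ^(n+1) - x ξ^n`,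
and the coefficients satisfy the matching recurrence `α^(n+2)_(p+1) = 2α^(n+1)_(p+1) - α^(n)_p`
(a Pascal-type identity for ballot numbers). So it suffices to treat `n = 0` and `n = 1`.
For `n = 1` the coefficients are `α_(k+1) = C_k / (2·4^k)` with `C_k` the Catalan numbers;
their partial sums are `1 - binom(2N, N)/4^N ≤ 1`, which gives convergence on `[0, 1]` and
`f ≤ 1` for the sum `f`. The Catalan recurrence says that the Cauchy square of the series is
the series of `α^(2)`, so `f² = 2f - x`, and `f ≤ 1` selects the root `f = 1 - √(1 - x)`.
-/

/-- The coefficients `α_p^{(n)}` of the power series of `(1 - √(1-x))^n`: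
`α_p^{(n)} = 0` for `p < n` and
`α_p^{(n)} = (n/(2p)) · 2^{n+1-2p} · C(2p-n-1, p-1)` for `p ≥ n` (with `n ≥ 1`);
by convention `α_0^{(0)} = 1` and `α_p^{(0)} = 0` for `p ≥ 1`. -/
noncomputable def alph (n p : ℕ) : ℝ :=
  if n = 0 then (if p = 0 then 1 else 0)
  else if p < n then 0
  else ((n : ℝ) / (2 * p)) * (2 : ℝ) ^ ((n : ℤ) + 1 - 2 * (p : ℤ)) *
    (Nat.choose (2 * p - n - 1) (p - 1) : ℝ)

open Finset

lemma alph_of_lt {n p : ℕ} (h : p < n) : alph n p = 0 := by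
  simp [alph, h, show n ≠ 0 by omega]

lemma alph_nonneg (n p : ℕ) : 0 ≤ alph n p := by
  unfold alph
  split_ifs <;> positivity

lemma alph_succ_add (m k : ℕ) :
    alph (m + 1) (m + 1 + k) =
      (m + 1) / (m + 1 + k) * (m + 2 * k).choose k / 2 ^ (m + 1 + 2 * k) := by
  have hexp : ((m + 1 : ℕ) : ℤ) + 1 - 2 * ((m + 1 + k : ℕ) : ℤ) = 1 - ((m + 1 + 2 * k : ℕ) : ℤ) := by
    push_cast; ring
  have hchoose : (2 * (m + 1 + k) - (m + 1) - 1).choose (m + 1 + k - 1) = (m + 2 * k).choose k := by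
    rw [show 2 * (m + 1 + k) - (m + 1) - 1 = m + k + k by omega, show m + 1 + k - 1 = m + k by omega,
      Nat.choose_symm_add, two_mul, add_assoc]
  rw [alph, if_neg m.succ_ne_zero, if_neg (by omega), hexp, hchoose, zpow_sub₀ two_ne_zero, zpow_one,
    zpow_natCast]
  push_cast
  field_simp

lemma alph_self (n : ℕ) : alph n n = 1 / 2 ^ n := by
  rcases n with _ | m
  · simp [alph]
  · simpa [(Nat.cast_add_one_pos m).ne'] using alph_succ_add m 0

lemma alph_add_two_add_succ (m k : ℕ) :
    alph (m + 1 + 1) (m + 1 + 1 + k) = 2 * alph (m + 1) (m + 1 + (k + 1)) - alph m (m + (k + 1)) := by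
  -- with `N = m + 1 + 2k`, both `C(N + 1, k + 1)` and `C(N, k + 1)` are rational multiples of
  -- `C(N, k)`, after which the identity is one of rational functions
  have hN : ((m + 1 + 2 * k + 1).choose (k + 1) : ℝ)
      = (m + 1 + 2 * k + 1) * (m + 1 + 2 * k).choose k / (k + 1) := by
    rw [eq_div_iff (by positivity)]
    exact_mod_cast (Nat.add_one_mul_choose_eq (m + 1 + 2 * k) k).symm
  rcases m with _ | j
  · have h0 : alph 0 (0 + (k + 1)) = 0 := by simp [alph]
    rw [alph_succ_add 1 k, alph_succ_add 0 (k + 1), h0,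
      show 0 + 2 * (k + 1) = 0 + 1 + 2 * k + 1 by ring, hN]
    push_cast
    field_simp
    ring
  · have hR : ((j + 1 + 1 + 2 * k).choose (k + 1) : ℝ)
        = (j + 1 + 1 + 2 * k).choose k * (j + 2 + k) / (k + 1) := by
      rw [eq_div_iff (by positivity)]
      have := Nat.choose_succ_right_eq (j + 1 + 1 + 2 * k) k
      rw [show j + 1 + 1 + 2 * k - k = j + 2 + k by omega] at this
      exact_mod_cast this
    rw [alph_succ_add (j + 1 + 1) k, alph_succ_add (j + 1) (k + 1), alph_succ_add j (k + 1),
      show j + 1 + 2 * (k + 1) = j + 1 + 1 + 2 * k + 1 by ring,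
      show j + 2 * (k + 1) = j + 1 + 1 + 2 * k by ring, hN, hR]
    push_cast
    field_simp
    ring

lemma alph_add_two_succ (m p : ℕ) : alph (m + 2) (p + 1) = 2 * alph (m + 1) (p + 1) - alph m p := by
  rcases lt_trichotomy p m with hlt | rfl | hgt
  · rw [alph_of_lt (by omega), alph_of_lt (by omega), alph_of_lt hlt]
    ring
  · rw [alph_of_lt (by omega), alph_self, alph_self, pow_succ]
    field_simp
    ring
  · obtain ⟨k, rfl⟩ := Nat.exists_eq_add_of_lt hgt
    convert alph_add_two_add_succ m k using 2 <;> ring_nf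

lemma alph_one_succ (k : ℕ) : alph 1 (k + 1) = catalan k / (2 * 4 ^ k) := by
  have hcat : ((k : ℝ) + 1) * catalan k = (2 * k).choose k := by
    exact_mod_cast (succ_mul_catalan_eq_centralBinom k).trans (Nat.centralBinom_eq_two_mul_choose k)
  rw [show k + 1 = 0 + 1 + k by ring, alph_succ_add]
  simp only [Nat.cast_zero, zero_add]
  rw [pow_add, pow_mul, ← hcat]
  field_simp
  ring

lemma sum_range_alph_one (N : ℕ) :
    ∑ p ∈ range (N + 1), alph 1 p = 1 - N.centralBinom / 4 ^ N := by
  induction N with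
  | zero => simp [alph_of_lt]
  | succ N ih =>
    have hcat : (catalan N : ℝ) = N.centralBinom / (N + 1) := by
      rw [eq_div_iff (by positivity), mul_comm]
      exact_mod_cast succ_mul_catalan_eq_centralBinom N
    have hcb : ((N + 1).centralBinom : ℝ) = 2 * (2 * N + 1) * N.centralBinom / (N + 1) := by
      rw [eq_div_iff (by positivity), mul_comm]
      exact_mod_cast Nat.succ_mul_centralBinom_succ N
    rw [sum_range_succ, ih, alph_one_succ, hcat, hcb]
    field_simp
    ring

lemma sum_antidiagonal_alph_one (p : ℕ) :
    ∑ ij ∈ antidiagonal p, alph 1 ij.1 * alph 1 ij.2 = alph 2 p := by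
  rcases p with _ | _ | k
  · simp [alph_of_lt]
  · simp [Nat.sum_antidiagonal_succ, alph_of_lt]
  · have h0 : alph 0 (k + 1) = 0 := by simp [alph]
    rw [alph_add_two_succ 0 (k + 1), h0, sub_zero, alph_one_succ, catalan_succ',
      Nat.sum_antidiagonal_succ, Nat.sum_antidiagonal_succ']
    simp only [alph_of_lt zero_lt_one, zero_mul, mul_zero, zero_add, alph_one_succ]
    push_cast
    rw [sum_div, mul_sum]
    refine sum_congr rfl fun ij hij => ?_
    rw [← mem_antidiagonal.mp hij, pow_add]
    field_simp
    ring

lemma hasSum_alph_zero (x : ℝ) : HasSum (fun p => alph 0 p * x ^ p) 1 := by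
  convert hasSum_ite_eq 0 (1 : ℝ) using 1
  funext p
  split_ifs with hp <;> simp [alph, hp]

lemma HasSum.alph_add_two {m : ℕ} {x A B : ℝ} (hA : HasSum (fun p => alph m p * x ^ p) A)
    (hB : HasSum (fun p => alph (m + 1) p * x ^ p) B) :
    HasSum (fun p => alph (m + 2) p * x ^ p) (2 * B - x * A) := by
  have hB' : HasSum (fun p => alph (m + 1) (p + 1) * x ^ (p + 1)) B := by
    simpa [alph_of_lt] using (hasSum_nat_add_iff' 1).mpr hB
  have hrec : (fun p => 2 * (alph (m + 1) (p + 1) * x ^ (p + 1)) - x * (alph m p * x ^ p))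
      = fun p => alph (m + 2) (p + 1) * x ^ (p + 1) := by
    funext p
    rw [alph_add_two_succ, pow_succ]
    ring
  have hshift := hrec ▸ (hB'.mul_left 2).sub (hA.mul_left x)
  simpa [alph_of_lt] using hshift.zero_add (f := fun p => alph (m + 2) p * x ^ p)

lemma hasSum_alph_one {x : ℝ} (hx0 : 0 ≤ x) (hx1 : x ≤ 1) :
    HasSum (fun p => alph 1 p * x ^ p) (1 - √(1 - x)) := by
  set a : ℕ → ℝ := fun p => alph 1 p * x ^ p
  have ha0 (p : ℕ) : 0 ≤ a p := mul_nonneg (alph_nonneg 1 p) (pow_nonneg hx0 p)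
  have hpartial (N : ℕ) : ∑ p ∈ range N, a p ≤ 1 := calc
    ∑ p ∈ range N, a p ≤ ∑ p ∈ range (N + 1), alph 1 p := by
      rw [sum_range_succ]
      refine le_add_of_le_of_nonneg (sum_le_sum fun p _ => ?_) (alph_nonneg 1 N)
      exact mul_le_of_le_one_right (alph_nonneg 1 p) (pow_le_one₀ hx0 hx1)
    _ = 1 - N.centralBinom / 4 ^ N := sum_range_alph_one N
    _ ≤ 1 := sub_le_self _ (by positivity)
  have hs : Summable a := summable_of_sum_range_le ha0 hpartial
  set f := ∑' p, a p
  have hf1 : f ≤ 1 := Real.tsum_le_of_sum_range_le ha0 hpartial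
  have hnorm : Summable fun p => ‖a p‖ := by simpa only [Real.norm_eq_abs] using hs.abs
  have hsquare : f * f = 2 * f - x := by
    have hcauchy := tsum_mul_tsum_eq_tsum_sum_antidiagonal_of_summable_norm hnorm hnorm
    have hcoeff (p : ℕ) : ∑ ij ∈ antidiagonal p, a ij.1 * a ij.2 = alph 2 p * x ^ p := by
      rw [← sum_antidiagonal_alph_one, sum_mul]
      refine sum_congr rfl fun ij hij => ?_
      rw [← mem_antidiagonal.mp hij, pow_add]
      ring
    have h2 := (hasSum_alph_zero x).alph_add_two hs.hasSum
    rw [hcauchy, tsum_congr hcoeff, h2.tsum_eq, mul_one]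
  have hroot : √(1 - x) = 1 - f := by
    rw [Real.sqrt_eq_iff_mul_self_eq (by linarith) (by linarith)]
    linear_combination -hsquare
  rw [hroot, sub_sub_cancel]
  exact hs.hasSum

theorem stmt1_general (n : ℕ) (x : ℝ) (hx : x ∈ Set.Icc (0 : ℝ) 1) :
    HasSum (fun p : ℕ => alph n p * x ^ p) ((1 - Real.sqrt (1 - x)) ^ n) := by
  induction n using Nat.twoStepInduction with
  | zero => simpa using hasSum_alph_zero x
  | one => simpa using hasSum_alph_one hx.1 hx.2
  | more m hm hm1 =>
    have hsqrt : √(1 - x) ^ 2 = 1 - x := Real.sq_sqrt (by linarith [hx.2])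
    convert hm.alph_add_two hm1 using 1
    linear_combination (1 - √(1 - x)) ^ m * hsqrt

/-- For every `n ≥ 1` and `x ∈ [0,1]`, the series `Σ_p α_p^{(n)} x^p` converges
and equals `(1 - √(1-x))^n`. -/
theorem stmt1 (n : ℕ) (hn : 1 ≤ n) (x : ℝ) (hx : x ∈ Set.Icc (0 : ℝ) 1) :
    HasSum (fun p : ℕ => alph n p * x ^ p) ((1 - Real.sqrt (1 - x)) ^ n) :=
  stmt1_general n x hx
end

section
/- Let E be an ordered Banach space, let d > 1 be an integer, and let {T_t}_{t ∈ ℝ_+^d} be a strongly continuous action of the additive semigroup ℝ_+^d by positive contractions on E. For a > 0 let Q_a = {t ∈ ℝ_+^d : t_i < a for all i} and define M_a(f) = (1/a^d) ∫_{Q_a} T_t f dt; set M₁(f) = ∫_{[0,1)^d} T_t f dt and S_i = T_{e_i}. Then for every real a ≥ 1, with n = ⌊a⌋, and every f ∈ E with f ≥ 0, one has M_a(f) ≤ (1/n^d) Σ_{0 ≤ j_1 < n+1} ⋯ Σ_{0 ≤ j_d < n+1} S_1^{j_1} ⋯ S_d^{j_d} M₁(f). -/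
/-!
Since the orbit of `f ≥ 0` stays in the cone, integrals of it over sets are monotone in the set,
so `∫_{[0,a)^d} T_t f dt ≤ ∫_{[0,n+1)^d} T_t f dt`. The larger cube splits into the unit cubes
`j + [0,1)^d` with `0 ≤ j_i ≤ n`, and by the semigroup law the integral over `j + [0,1)^d` is
`S_1^{j_1} ⋯ S_d^{j_d} M₁(f)`. Finally `1/a^d ≤ 1/n^d`.
-/

open MeasureTheory Set

section ConvexCone

variable {E : Type*} [NormedAddCommGroup E] [NormedSpace ℝ E] {K : Set E}

lemma add_mem_of_convex_of_smul_mem (hK_convex : Convex ℝ K)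
    (hK_cone : ∀ c : ℝ, 0 ≤ c → ∀ x ∈ K, c • x ∈ K) {x y : E} (hx : x ∈ K) (hy : y ∈ K) :
    x + y ∈ K := by
  have hmid : (2 : ℝ)⁻¹ • x + (2 : ℝ)⁻¹ • y ∈ K :=
    hK_convex hx hy (by norm_num) (by norm_num) (by norm_num)
  convert hK_cone 2 zero_le_two _ hmid using 1
  rw [smul_add, smul_inv_smul₀ two_ne_zero, smul_inv_smul₀ two_ne_zero]

lemma smul_sub_smul_mem_of_convex_of_smul_mem (hK_convex : Convex ℝ K)
    (hK_cone : ∀ c : ℝ, 0 ≤ c → ∀ x ∈ K, c • x ∈ K) {x y : E} (hx : x ∈ K) (hxy : y - x ∈ K)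
    {α β : ℝ} (hβ : 0 ≤ β) (hβα : β ≤ α) : α • y - β • x ∈ K := by
  have hsplit : α • y - β • x = α • (y - x) + (α - β) • x := by module
  rw [hsplit]
  exact add_mem_of_convex_of_smul_mem hK_convex hK_cone
    (hK_cone α (hβ.trans hβα) _ hxy) (hK_cone _ (sub_nonneg.2 hβα) _ hx)

variable [CompleteSpace E] {X : Type*} [MeasurableSpace X] {μ : Measure X} {s t : Set X}
  {g : X → E}

lemma setIntegral_mem_of_convex_of_smul_mem (hK_closed : IsClosed K) (hK_convex : Convex ℝ K)
    (hK_cone : ∀ c : ℝ, 0 ≤ c → ∀ x ∈ K, c • x ∈ K) (hK_zero : (0 : E) ∈ K) (hs : μ s ≠ ⊤)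
    (hg : IntegrableOn g s μ) (hgK : ∀ᵐ x ∂μ.restrict s, g x ∈ K) : ∫ x in s, g x ∂μ ∈ K := by
  by_cases hs0 : μ s = 0
  · rwa [Measure.restrict_eq_zero.2 hs0, integral_zero_measure]
  · rw [← measure_smul_setAverage g hs]
    exact hK_cone _ ENNReal.toReal_nonneg _ (hK_convex.set_average_mem hK_closed hs0 hs hgK hg)

lemma setIntegral_sub_setIntegral_mem_of_subset (hK_closed : IsClosed K)
    (hK_convex : Convex ℝ K) (hK_cone : ∀ c : ℝ, 0 ≤ c → ∀ x ∈ K, c • x ∈ K)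
    (hK_zero : (0 : E) ∈ K) (hst : s ⊆ t) (hs : MeasurableSet s) (ht : μ t ≠ ⊤)
    (hg : IntegrableOn g t μ) (hgK : ∀ᵐ x ∂μ.restrict t, g x ∈ K) :
    ∫ x in t, g x ∂μ - ∫ x in s, g x ∂μ ∈ K := by
  rw [← setIntegral_sdiff hs hg hst]
  exact setIntegral_mem_of_convex_of_smul_mem hK_closed hK_convex hK_cone hK_zero
    (measure_ne_top_of_subset sdiff_subset ht) (hg.mono_set sdiff_subset)
    (ae_restrict_of_ae_restrict_of_subset sdiff_subset hgK)

end ConvexCone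

section Boxes

variable {ι : Type*}

lemma pairwise_disjoint_univ_pi_Ico_natCast :
    Pairwise (Function.onFun Disjoint fun j : ι → ℕ =>
      univ.pi fun i => Ico (j i : ℝ) (j i + 1)) := by
  intro j j' hne
  refine disjoint_left.2 fun t ht ht' => hne (funext fun i => ?_)
  rw [← Nat.floor_eq_on_Ico _ _ (ht i (mem_univ i)), Nat.floor_eq_on_Ico _ _ (ht' i (mem_univ i))]

variable [Fintype ι]

lemma univ_pi_Ico_natCast_eq_biUnion [DecidableEq ι] (N : ℕ) :
    univ.pi (fun _ : ι => Ico (0 : ℝ) N) =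
      ⋃ j ∈ Fintype.piFinset (fun _ : ι => Finset.range N),
        univ.pi fun i => Ico (j i : ℝ) (j i + 1) := by
  ext t
  simp only [mem_pi, mem_univ, forall_const, mem_Ico, mem_iUnion, Fintype.mem_piFinset,
    Finset.mem_range, exists_prop]
  constructor
  · intro ht
    exact ⟨fun i => ⌊t i⌋₊, fun i => (Nat.floor_lt (ht i).1).2 (ht i).2,
      fun i => ⟨Nat.floor_le (ht i).1, Nat.lt_floor_add_one _⟩⟩
  · rintro ⟨j, hjN, hjt⟩ i
    refine ⟨(Nat.cast_nonneg _).trans (hjt i).1, (hjt i).2.trans_le ?_⟩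
    exact_mod_cast hjN i

lemma volume_univ_pi_Ico_ne_top (u v : ι → ℝ) :
    volume (univ.pi fun i => Ico (u i) (v i)) ≠ ⊤ := by
  simp [volume_pi_pi, Real.volume_Ico, ENNReal.prod_ne_top]

variable {E : Type*} [NormedAddCommGroup E]

lemma integrableOn_univ_pi_Ico_of_continuousOn_nonneg {g : (ι → ℝ) → E}
    (hg : ContinuousOn g {t | 0 ≤ t}) {u v : ι → ℝ} (hu : 0 ≤ u) :
    IntegrableOn g (univ.pi fun i => Ico (u i) (v i)) := by
  have hIcc : IntegrableOn g (Icc u v) :=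
    (hg.mono fun t ht => hu.trans ht.1).integrableOn_compact isCompact_Icc
  exact hIcc.mono_set fun t ht => by
    rw [← pi_univ_Icc]
    exact fun i hi => Ico_subset_Icc_self (ht i hi)

variable [NormedSpace ℝ E]

lemma setIntegral_univ_pi_Ico_comp_add_left (g : (ι → ℝ) → E) (c u v : ι → ℝ) :
    ∫ t in univ.pi (fun i => Ico (u i) (v i)), g (c + t) =
      ∫ t in univ.pi (fun i => Ico (c i + u i) (c i + v i)), g t := by
  have hpre : (c + ·) ⁻¹' univ.pi (fun i => Ico (c i + u i) (c i + v i)) =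
      univ.pi fun i => Ico (u i) (v i) := by
    ext t
    simp
  rw [← hpre]
  exact (measurePreserving_add_left volume c).setIntegral_preimage_emb
    (measurableEmbedding_addLeft c) g _

lemma setIntegral_univ_pi_Ico_natCast_eq_sum [CompleteSpace E] [DecidableEq ι] (N : ℕ)
    {g : (ι → ℝ) → E} (hg : IntegrableOn g (univ.pi fun _ : ι => Ico (0 : ℝ) N)) :
    ∫ t in univ.pi (fun _ : ι => Ico (0 : ℝ) N), g t =
      ∑ j ∈ Fintype.piFinset (fun _ : ι => Finset.range N),
        ∫ t in univ.pi (fun i => Ico (j i : ℝ) (j i + 1)), g t := by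
  rw [univ_pi_Ico_natCast_eq_biUnion] at hg ⊢
  exact integral_biUnion_finset _ (fun j _ => MeasurableSet.univ_pi fun _ => measurableSet_Ico)
    (pairwise_disjoint_univ_pi_Ico_natCast.set_pairwise _)
    fun j hj => hg.mono_set (subset_biUnion_of_mem (u := fun j =>
      univ.pi fun i => Ico (j i : ℝ) (j i + 1)) hj)

end Boxes

section Semigroup

variable {ι E : Type*} [NormedAddCommGroup E] [NormedSpace ℝ E] {T : (ι → ℝ) → (E →L[ℝ] E)}

lemma pow_mul_eq_of_mul_eq_add (hT : ∀ s t : ι → ℝ, 0 ≤ s → 0 ≤ t → T s * T t = T (s + t))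
    {v : ι → ℝ} (hv : 0 ≤ v) (k : ℕ) {t : ι → ℝ} (ht : 0 ≤ t) :
    T v ^ k * T t = T (k • v + t) := by
  induction k generalizing t with
  | zero => simp
  | succ k ih =>
    rw [pow_succ, mul_assoc, hT v t hv ht, ih (add_nonneg hv ht), succ_nsmul, add_assoc]

lemma list_prod_pow_mul_eq_of_mul_eq_add
    (hT : ∀ s t : ι → ℝ, 0 ≤ s → 0 ≤ t → T s * T t = T (s + t))
    (l : List ((ι → ℝ) × ℕ)) (hl : ∀ p ∈ l, 0 ≤ p.1) {t : ι → ℝ} (ht : 0 ≤ t) :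
    (l.map fun p => T p.1 ^ p.2).prod * T t = T ((l.map fun p => p.2 • p.1).sum + t) := by
  induction l with
  | nil => simp
  | cons p l ih =>
    have hl' : ∀ q ∈ l, 0 ≤ q.1 := fun q hq => hl q (List.mem_cons_of_mem _ hq)
    have hsum : 0 ≤ (l.map fun p => p.2 • p.1).sum :=
      List.sum_nonneg fun w hw => by
        obtain ⟨q, hq, rfl⟩ := List.mem_map.1 hw
        exact nsmul_nonneg (hl' q hq) _
    rw [List.map_cons, List.prod_cons, mul_assoc, ih hl', pow_mul_eq_of_mul_eq_add hT
      (hl p List.mem_cons_self) _ (add_nonneg hsum ht), List.map_cons, List.sum_cons, add_assoc]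

end Semigroup

section CoordinateShifts

variable {E : Type*} [NormedAddCommGroup E] [NormedSpace ℝ E] {d : ℕ}
  {T : (Fin d → ℝ) → (E →L[ℝ] E)}

lemma ofFn_prod_pow_single_mul_eq
    (hT : ∀ s t : Fin d → ℝ, 0 ≤ s → 0 ≤ t → T s * T t = T (s + t))
    (j : Fin d → ℕ) {t : Fin d → ℝ} (ht : 0 ≤ t) :
    (List.ofFn fun i => T (Pi.single i 1) ^ j i).prod * T t = T ((fun i => (j i : ℝ)) + t) := by
  have hl := list_prod_pow_mul_eq_of_mul_eq_add hT (List.ofFn fun i => (Pi.single i 1, j i))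
    (by simp [List.mem_ofFn, Pi.single_nonneg]) ht
  simp only [List.map_ofFn, Function.comp_def, List.sum_ofFn] at hl
  convert hl using 3
  ext i
  simp [Finset.sum_apply, Pi.single_apply]

lemma ofFn_prod_pow_single_apply_setIntegral [CompleteSpace E]
    (hT : ∀ s t : Fin d → ℝ, 0 ≤ s → 0 ≤ t → T s * T t = T (s + t)) {f : E}
    (hf : ContinuousOn (fun t => T t f) {t | 0 ≤ t}) (j : Fin d → ℕ) :
    (List.ofFn fun i => T (Pi.single i 1) ^ j i).prod
        (∫ t in univ.pi (fun _ : Fin d => Ico (0 : ℝ) 1), T t f) =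
      ∫ t in univ.pi (fun i => Ico (j i : ℝ) (j i + 1)), T t f := by
  have hshift := setIntegral_univ_pi_Ico_comp_add_left (fun t => T t f) (fun i => (j i : ℝ)) 0 1
  simp only [Pi.zero_apply, Pi.one_apply, add_zero] at hshift
  have hint : IntegrableOn (fun t => T t f) (univ.pi fun _ : Fin d => Ico (0 : ℝ) 1) :=
    integrableOn_univ_pi_Ico_of_continuousOn_nonneg hf le_rfl
  rw [← hshift, ← ContinuousLinearMap.integral_comp_comm _ hint]
  refine setIntegral_congr_fun (MeasurableSet.univ_pi fun _ => measurableSet_Ico) fun t ht => ?_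
  have ht0 : 0 ≤ t := fun i => (ht i (mem_univ i)).1
  exact congrArg (fun P : E →L[ℝ] E => P f) (ofFn_prod_pow_single_mul_eq hT j ht0)

end CoordinateShifts

theorem stmt6_general (E : Type*) [NormedAddCommGroup E] [NormedSpace ℝ E] [CompleteSpace E]
    (K : Set E) (hK_closed : IsClosed K) (hK_convex : Convex ℝ K)
    (hK_cone : ∀ c : ℝ, 0 ≤ c → ∀ x ∈ K, c • x ∈ K)
    (d : ℕ)
    (T : (Fin d → ℝ) → (E →L[ℝ] E))
    (hT_semigroup : ∀ s t : Fin d → ℝ, 0 ≤ s → 0 ≤ t → T s * T t = T (s + t))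
    (hT_pos : ∀ t : Fin d → ℝ, 0 ≤ t → ∀ x ∈ K, T t x ∈ K)
    (hT_cont : ∀ f : E, ContinuousOn (fun t => T t f) {t : Fin d → ℝ | 0 ≤ t}) :
    ∀ a : ℝ, 1 ≤ a → ∀ f ∈ K,
      ((1 / (Nat.floor a : ℝ) ^ d) •
          ∑ j ∈ Fintype.piFinset (fun _ : Fin d => Finset.range (Nat.floor a + 1)),
            ((List.ofFn fun i => (T (Pi.single i 1)) ^ (j i)).prod)
              (∫ t in Set.univ.pi (fun _ : Fin d => Set.Ico (0 : ℝ) 1), T t f))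
        - (1 / a ^ d) • (∫ t in Set.univ.pi (fun _ : Fin d => Set.Ico (0 : ℝ) a), T t f)
        ∈ K := by
  intro a ha f hf
  set n := ⌊a⌋₊
  have hn : (1 : ℝ) ≤ n := by exact_mod_cast Nat.one_le_floor_iff _ |>.2 ha
  have hK_zero : (0 : E) ∈ K := by simpa using hK_cone 0 le_rfl f hf
  have horbit_mem : ∀ b : ℝ, ∀ᵐ t ∂volume.restrict (univ.pi fun _ : Fin d => Ico (0 : ℝ) b),
      T t f ∈ K :=
    fun b => ae_restrict_of_forall_mem (MeasurableSet.univ_pi fun _ => measurableSet_Ico)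
      fun t ht => hT_pos t (fun i => (ht i (mem_univ i)).1) f hf
  have horbit_int : ∀ b : ℝ,
      IntegrableOn (fun t => T t f) (univ.pi fun _ : Fin d => Ico (0 : ℝ) b) :=
    fun b => integrableOn_univ_pi_Ico_of_continuousOn_nonneg (hT_cont f) le_rfl
  have hsum : ∑ j ∈ Fintype.piFinset (fun _ : Fin d => Finset.range (n + 1)),
      (List.ofFn fun i => T (Pi.single i 1) ^ j i).prod
        (∫ t in univ.pi (fun _ : Fin d => Ico (0 : ℝ) 1), T t f) =
      ∫ t in univ.pi (fun _ : Fin d => Ico (0 : ℝ) ↑(n + 1)), T t f := by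
    rw [setIntegral_univ_pi_Ico_natCast_eq_sum _ (horbit_int _)]
    exact Finset.sum_congr rfl fun j _ =>
      ofFn_prod_pow_single_apply_setIntegral hT_semigroup (hT_cont f) j
  have hcube_subset : univ.pi (fun _ : Fin d => Ico (0 : ℝ) a) ⊆
      univ.pi fun _ : Fin d => Ico (0 : ℝ) ↑(n + 1) :=
    pi_mono fun _ _ => Ico_subset_Ico_right (by exact_mod_cast (Nat.lt_floor_add_one a).le)
  rw [hsum]
  refine smul_sub_smul_mem_of_convex_of_smul_mem hK_convex hK_cone
    (setIntegral_mem_of_convex_of_smul_mem hK_closed hK_convex hK_cone hK_zero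
      (volume_univ_pi_Ico_ne_top _ _) (horbit_int a) (horbit_mem a))
    (setIntegral_sub_setIntegral_mem_of_subset hK_closed hK_convex hK_cone hK_zero
      hcube_subset (MeasurableSet.univ_pi fun _ => measurableSet_Ico) (volume_univ_pi_Ico_ne_top _ _)
      (horbit_int _) (horbit_mem _))
    (by positivity) ?_
  exact one_div_le_one_div_of_le (by positivity)
    (pow_le_pow_left₀ (by positivity) (Nat.floor_le (by linarith)) d)

/-- Let `E` be an ordered Banach space with cone `K`, `d > 1`, and `{T_t}_{t ∈ ℝ_+^d}`
a strongly continuous action of `ℝ_+^d` by positive contractions on `E`.  With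
`M_a(f) = (1/a^d) ∫_{[0,a)^d} T_t f dt`, `M₁(f) = ∫_{[0,1)^d} T_t f dt` and
`S_i = T_{e_i}`, for every `a ≥ 1`, `n = ⌊a⌋`, and every `f ∈ K`,
`M_a(f) ≤ (1/n^d) Σ_{0 ≤ j₁,…,j_d < n+1} S_1^{j₁} ⋯ S_d^{j_d} (M₁ f)`
(the inequality meaning the difference lies in the cone `K`). -/
theorem stmt6 (E : Type*) [NormedAddCommGroup E] [NormedSpace ℝ E] [CompleteSpace E]
    (K : Set E) (hK_closed : IsClosed K) (hK_convex : Convex ℝ K)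
    (hK_pointed : K ∩ (-K) = {0}) (hK_cone : ∀ c : ℝ, 0 ≤ c → ∀ x ∈ K, c • x ∈ K)
    (d : ℕ) (hd : 1 < d)
    (T : (Fin d → ℝ) → (E →L[ℝ] E))
    (hT_id : T 0 = 1)
    (hT_semigroup : ∀ s t : Fin d → ℝ, 0 ≤ s → 0 ≤ t → T s * T t = T (s + t))
    (hT_norm : ∀ t : Fin d → ℝ, 0 ≤ t → ‖T t‖ ≤ 1)
    (hT_pos : ∀ t : Fin d → ℝ, 0 ≤ t → ∀ x ∈ K, T t x ∈ K)
    (hT_cont : ∀ f : E, ContinuousOn (fun t => T t f) {t : Fin d → ℝ | 0 ≤ t}) :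
    ∀ a : ℝ, 1 ≤ a → ∀ f ∈ K,
      ((1 / (Nat.floor a : ℝ) ^ d) •
          ∑ j ∈ Fintype.piFinset (fun _ : Fin d => Finset.range (Nat.floor a + 1)),
            ((List.ofFn fun i => (T (Pi.single i 1)) ^ (j i)).prod)
              (∫ t in Set.univ.pi (fun _ : Fin d => Set.Ico (0 : ℝ) 1), T t f))
        - (1 / a ^ d) • (∫ t in Set.univ.pi (fun _ : Fin d => Set.Ico (0 : ℝ) a), T t f)
        ∈ K :=
  stmt6_general E K hK_closed hK_convex hK_cone d T hT_semigroup hT_pos hT_cont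
end

section
/- Let E be an ordered Banach space and let {κ_n}_{n=0}^∞ be a sequence of positive bounded linear operators on E satisfying κ_0 = id and κ_1 ∘ κ_n = w κ_{n+1} + (1 − w) κ_{n−1} for all n ≥ 1, where 1/2 < w < 1 is fixed. Then for every n ∈ ℕ there exist real coefficients a_n(0), …, a_n(n) with 0 ≤ a_n(l) ≤ 1 and Σ_{l=0}^{n} a_n(l) = 1 such that the composition power κ_1^n equals the convex combination Σ_{l=0}^{n} a_n(l) κ_l. -/
/-!
Left multiplication by `κ 1` is linear, so it maps the convex hull of `κ 0, …, κ n` onto the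
convex hull of the products `κ 1 * κ l`. The recursion writes each such product as a convex
combination, with weights `w` and `1 - w`, of `κ (l + 1)` and `κ (l - 1)` (and `κ 1 * κ 0 = κ 1`),
so by induction `κ 1 ^ n` lies in the convex hull of `κ 0, …, κ n`.
-/

open Finset

theorem exists_sum_range_of_mem_convexHull_image_Iic {R E : Type*} [Semiring R] [PartialOrder R]
    [IsOrderedRing R] [AddCommMonoid E] [Module R E] {v : ℕ → E} {n : ℕ} {x : E}
    (hx : x ∈ convexHull R (v '' Set.Iic n)) :
    ∃ a : ℕ → R, (∀ l ≤ n, 0 ≤ a l) ∧ ∑ l ∈ range (n + 1), a l = 1 ∧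
      x = ∑ l ∈ range (n + 1), a l • v l := by
  suffices h : convexHull R (v '' Set.Iic n) ⊆ {y | ∃ a : ℕ → R, (∀ l ≤ n, 0 ≤ a l) ∧
      ∑ l ∈ range (n + 1), a l = 1 ∧ y = ∑ l ∈ range (n + 1), a l • v l} from h hx
  refine convexHull_min ?_ ?_
  · rintro _ ⟨m, hmn, rfl⟩
    have hm : m ∈ range (n + 1) := mem_range_succ_iff.2 hmn
    refine ⟨fun l => if l = m then 1 else 0, fun l _ => ite_nonneg zero_le_one le_rfl, ?_, ?_⟩
    · simp [hm]
    · simp [ite_smul, hm]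
  · rintro _ ⟨a, ha₀, ha₁, rfl⟩ _ ⟨b, hb₀, hb₁, rfl⟩ s t hs ht hst
    refine ⟨s • a + t • b, fun l hl => ?_, ?_, ?_⟩
    · exact add_nonneg (mul_nonneg hs (ha₀ l hl)) (mul_nonneg ht (hb₀ l hl))
    · simp only [Pi.add_apply, Pi.smul_apply, smul_eq_mul, sum_add_distrib, ← mul_sum, ha₁, hb₁,
        mul_one, hst]
    · simp only [Pi.add_apply, Pi.smul_apply, smul_eq_mul, add_smul, mul_smul, sum_add_distrib,
        smul_sum]

section ThreeTermRecursion

variable {R A : Type*} [CommRing R] [PartialOrder R] [IsOrderedRing R] [Ring A] [Algebra R A]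
  {κ : ℕ → A} {w : R}

theorem mul_mem_convexHull_image_Iic_succ (hw₀ : 0 ≤ w) (hw₁ : w ≤ 1) (hκ₀ : κ 0 = 1)
    (hκ_rec : ∀ n : ℕ, 1 ≤ n → κ 1 * κ n = w • κ (n + 1) + (1 - w) • κ (n - 1))
    {n l : ℕ} (hl : l ≤ n) : κ 1 * κ l ∈ convexHull R (κ '' Set.Iic (n + 1)) := by
  have hmem : ∀ m ≤ n + 1, κ m ∈ convexHull R (κ '' Set.Iic (n + 1)) := fun m hm =>
    subset_convexHull R _ ⟨m, hm, rfl⟩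
  rcases l with _ | l
  · rw [hκ₀, mul_one]
    exact hmem 1 (by omega)
  · rw [hκ_rec (l + 1) (by omega), Nat.add_sub_cancel]
    exact convex_convexHull R _ (hmem (l + 2) (by omega)) (hmem l (by omega)) hw₀
      (sub_nonneg.2 hw₁) (add_sub_cancel w 1)

theorem pow_mem_convexHull_image_Iic (hw₀ : 0 ≤ w) (hw₁ : w ≤ 1) (hκ₀ : κ 0 = 1)
    (hκ_rec : ∀ n : ℕ, 1 ≤ n → κ 1 * κ n = w • κ (n + 1) + (1 - w) • κ (n - 1)) (n : ℕ) :
    κ 1 ^ n ∈ convexHull R (κ '' Set.Iic n) := by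
  induction n with
  | zero =>
    rw [pow_zero, ← hκ₀]
    exact subset_convexHull R _ ⟨0, Set.mem_Iic.2 le_rfl, rfl⟩
  | succ n ih =>
    have hstep : LinearMap.mulLeft R (κ 1) '' convexHull R (κ '' Set.Iic n) ⊆
        convexHull R (κ '' Set.Iic (n + 1)) := by
      rw [LinearMap.image_convexHull, ← Set.image_comp]
      refine convexHull_min ?_ (convex_convexHull R _)
      rintro _ ⟨l, hl, rfl⟩
      exact mul_mem_convexHull_image_Iic_succ hw₀ hw₁ hκ₀ hκ_rec hl
    rw [pow_succ']
    exact hstep (Set.mem_image_of_mem _ ih)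

end ThreeTermRecursion

theorem stmt9_general (E : Type*) [NormedAddCommGroup E] [NormedSpace ℝ E]
    (w : ℝ) (hw₁ : 1 / 2 < w) (hw₂ : w < 1)
    (κ : ℕ → (E →L[ℝ] E))
    (hκ₀ : κ 0 = 1)
    (hκ_rec : ∀ n : ℕ, 1 ≤ n → κ 1 * κ n = w • κ (n + 1) + (1 - w) • κ (n - 1)) :
    ∀ n : ℕ, ∃ a : ℕ → ℝ,
      (∀ l ≤ n, 0 ≤ a l ∧ a l ≤ 1) ∧
      (∑ l ∈ Finset.range (n + 1), a l) = 1 ∧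
      (κ 1) ^ n = ∑ l ∈ Finset.range (n + 1), a l • κ l := by
  intro n
  obtain ⟨a, ha₀, ha₁, hpow⟩ := exists_sum_range_of_mem_convexHull_image_Iic
    (pow_mem_convexHull_image_Iic (by linarith) hw₂.le hκ₀ hκ_rec n)
  refine ⟨a, fun l hl => ⟨ha₀ l hl, ?_⟩, ha₁, hpow⟩
  calc a l ≤ ∑ m ∈ range (n + 1), a m :=
        single_le_sum (fun m hm => ha₀ m (mem_range_succ_iff.1 hm)) (mem_range_succ_iff.2 hl)
    _ = 1 := ha₁

/-- Let `E` be an ordered Banach space (cone `K`) and `{κ_n}` a sequence of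
positive bounded operators on `E` with `κ_0 = id` and
`κ_1 ∘ κ_n = w κ_{n+1} + (1-w) κ_{n-1}` for `n ≥ 1`, where `1/2 < w < 1`.
Then for every `n` the composition power `κ_1^n` is a convex combination
`Σ_{l=0}^{n} a_n(l) κ_l` with `0 ≤ a_n(l) ≤ 1` and `Σ_{l=0}^{n} a_n(l) = 1`. -/
theorem stmt9 (E : Type*) [NormedAddCommGroup E] [NormedSpace ℝ E] [CompleteSpace E]
    (K : Set E) (hK_closed : IsClosed K) (hK_convex : Convex ℝ K)
    (hK_pointed : K ∩ (-K) = {0}) (hK_cone : ∀ c : ℝ, 0 ≤ c → ∀ x ∈ K, c • x ∈ K)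
    (w : ℝ) (hw₁ : 1 / 2 < w) (hw₂ : w < 1)
    (κ : ℕ → (E →L[ℝ] E))
    (hκ₀ : κ 0 = 1)
    (hκ_pos : ∀ n : ℕ, ∀ x ∈ K, κ n x ∈ K)
    (hκ_rec : ∀ n : ℕ, 1 ≤ n → κ 1 * κ n = w • κ (n + 1) + (1 - w) • κ (n - 1)) :
    ∀ n : ℕ, ∃ a : ℕ → ℝ,
      (∀ l ≤ n, 0 ≤ a l ∧ a l ≤ 1) ∧
      (∑ l ∈ Finset.range (n + 1), a l) = 1 ∧
      (κ 1) ^ n = ∑ l ∈ Finset.range (n + 1), a l • κ l :=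
  stmt9_general E w hw₁ hw₂ κ hκ₀ hκ_rec
end

section
/- Let X be a normed vector space and let {σ_n}_{n=0}^∞ be a sequence of pairwise commuting bounded linear operators on X with σ_0 = id and ‖σ_n‖ ≤ 1 for all n, satisfying σ_1 ∘ σ_n = w σ_{n+1} + (1 − w) σ_{n−1} for all n ≥ 1, where 1/2 < w < 1 is fixed. Define S_n = (1/(n+1)) Σ_{l=0}^{n} σ_l. Then for every fixed k ∈ ℤ_+, the operator norms ‖S_n ∘ (id − σ_k)‖ converge to 0 as n → ∞; equivalently, lim_{n→∞} sup_{‖y‖ ≤ 1} ‖S_n(y − σ_k(y))‖ = 0. -/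
/-!
Write `A n = ∑_{l ≤ n} σ l`, so that `S n = (n + 1)⁻¹ • A n`; it suffices that `A n * (1 - σ k)`
stays bounded in `n`. The elements `T` with `A n * T` bounded form a subspace that is stable under
left multiplication by `σ 1`, since `σ 1` commutes with every `A n`. Summing the recurrence
telescopes to `A n * (1 - σ 1) = w • (1 - σ (n + 1)) + (1 - w) • (σ n - σ 1)`, which is bounded,
and the recurrence itself rearranges to
`w • (1 - σ (k + 2)) = (1 - σ 1) + σ 1 * (1 - σ (k + 1)) - (1 - w) • (1 - σ k)`,
so two-step induction puts every `1 - σ k` in that subspace.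
-/

open Filter Asymptotics Finset

section PartialSums

variable {𝕜 R : Type*} [NormedField 𝕜] [NormedRing R] [NormedAlgebra 𝕜 R]

variable (𝕜) in
def partialSumBounded (σ : ℕ → R) : Submodule 𝕜 R where
  carrier := {T | (fun n => (∑ l ∈ range (n + 1), σ l) * T) =O[atTop] fun _ => (1 : ℝ)}
  add_mem' hT hU := by simpa only [Set.mem_ofPred_eq, mul_add] using hT.add hU
  zero_mem' := by simpa only [Set.mem_ofPred_eq, mul_zero] using isBigO_zero _ _
  smul_mem' c _ hT := by
    simpa only [Set.mem_ofPred_eq, mul_smul_comm, Pi.smul_def] using hT.const_smul_left c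

theorem mem_partialSumBounded {σ : ℕ → R} {T : R} :
    T ∈ partialSumBounded 𝕜 σ ↔
      (fun n => (∑ l ∈ range (n + 1), σ l) * T) =O[atTop] fun _ => (1 : ℝ) :=
  Iff.rfl

theorem mul_mem_partialSumBounded {σ : ℕ → R} {c T : R} (hc : ∀ l, Commute c (σ l))
    (hT : T ∈ partialSumBounded 𝕜 σ) : c * T ∈ partialSumBounded 𝕜 σ := by
  have hcomm (n : ℕ) :
      (∑ l ∈ range (n + 1), σ l) * (c * T) = c * ((∑ l ∈ range (n + 1), σ l) * T) := by
    rw [← mul_assoc, ← mul_assoc, (Commute.sum_right _ _ _ fun l _ => hc l).eq]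
  simpa only [mem_partialSumBounded, hcomm] using hT.const_mul_left c

section Recurrence

variable {σ : ℕ → R} {a : 𝕜}

theorem sum_range_mul_one_sub_of_recurrence (h0 : σ 0 = 1) (h1 : ∀ n, Commute (σ 1) (σ n))
    (hrec : ∀ n, σ 1 * σ (n + 1) = a • σ (n + 2) + (1 - a) • σ n) (n : ℕ) :
    (∑ l ∈ range (n + 1), σ l) * (1 - σ 1) = a • (1 - σ (n + 1)) + (1 - a) • (σ n - σ 1) := by
  induction n with
  | zero =>
    rw [sum_range_one, h0, one_mul]
    module
  | succ n ih =>
    rw [sum_range_succ, add_mul, ih, mul_sub, mul_one, ← (h1 (n + 1)).eq, hrec n]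
    module

theorem one_sub_mem_partialSumBounded_one (h0 : σ 0 = 1) (h1 : ∀ n, Commute (σ 1) (σ n))
    (hrec : ∀ n, σ 1 * σ (n + 1) = a • σ (n + 2) + (1 - a) • σ n)
    (hσ : (fun n => σ n) =O[atTop] fun _ => (1 : ℝ)) :
    1 - σ 1 ∈ partialSumBounded 𝕜 σ := by
  have hshift : (fun n => σ (n + 1)) =O[atTop] fun _ => (1 : ℝ) :=
    hσ.comp_tendsto (tendsto_add_atTop_nat 1)
  have hconst (c : R) : (fun _ : ℕ => c) =O[atTop] fun _ => (1 : ℝ) :=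
    isBigO_const_const c one_ne_zero _
  rw [mem_partialSumBounded]
  simp_rw [sum_range_mul_one_sub_of_recurrence h0 h1 hrec]
  exact (((hconst 1).sub hshift).const_smul_left a).add
    ((hσ.sub (hconst (σ 1))).const_smul_left (1 - a))

theorem one_sub_mem_partialSumBounded (h0 : σ 0 = 1) (h1 : ∀ n, Commute (σ 1) (σ n))
    (hrec : ∀ n, σ 1 * σ (n + 1) = a • σ (n + 2) + (1 - a) • σ n) (ha : a ≠ 0)
    (hσ : (fun n => σ n) =O[atTop] fun _ => (1 : ℝ)) (k : ℕ) :
    1 - σ k ∈ partialSumBounded 𝕜 σ := by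
  induction k using Nat.twoStepInduction with
  | zero => simp [h0]
  | one => exact one_sub_mem_partialSumBounded_one h0 h1 hrec hσ
  | more k hk hk₁ =>
    have hsplit : a • (1 - σ (k + 2)) =
        (1 - σ 1) + σ 1 * (1 - σ (k + 1)) - (1 - a) • (1 - σ k) := by
      rw [mul_sub, mul_one, hrec k]
      module
    rw [← Submodule.smul_mem_iff _ ha, hsplit]
    exact sub_mem (add_mem (one_sub_mem_partialSumBounded_one h0 h1 hrec hσ)
      (mul_mem_partialSumBounded h1 hk₁)) (Submodule.smul_mem _ _ hk)

end Recurrence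

end PartialSums

theorem stmt11_general (𝕜 : Type*) [RCLike 𝕜] (X : Type*) [NormedAddCommGroup X]
    [NormedSpace 𝕜 X]
    (σ : ℕ → (X →L[𝕜] X)) (hcomm : ∀ m n : ℕ, Commute (σ m) (σ n)) (hσ₀ : σ 0 = 1)
    (hσ_norm : ∀ n : ℕ, ‖σ n‖ ≤ 1)
    (w : ℝ) (hw₁ : 1 / 2 < w)
    (hrec : ∀ n : ℕ, 1 ≤ n →
      σ 1 * σ n = (w : 𝕜) • σ (n + 1) + ((1 - w : ℝ) : 𝕜) • σ (n - 1))
    (S : ℕ → (X →L[𝕜] X))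
    (hS : ∀ n : ℕ, S n = ((((n : ℝ) + 1) : ℝ) : 𝕜)⁻¹ • ∑ l ∈ Finset.range (n + 1), σ l) :
    ∀ k : ℕ,
      Filter.Tendsto (fun n : ℕ => ‖(S n).comp (1 - σ k)‖) Filter.atTop (nhds 0) := by
  intro k
  have hw : (w : 𝕜) ≠ 0 := RCLike.ofReal_ne_zero.mpr (by linarith)
  have hrec' (n : ℕ) : σ 1 * σ (n + 1) = (w : 𝕜) • σ (n + 2) + (1 - (w : 𝕜)) • σ n := by
    simpa using hrec (n + 1) n.succ_pos
  have hbdd : (fun n => σ n) =O[atTop] fun _ => (1 : ℝ) :=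
    .of_bound 1 (.of_forall fun n => by simpa using hσ_norm n)
  have hsum := one_sub_mem_partialSumBounded hσ₀ (hcomm 1) hrec' hw hbdd k
  have hinv : Tendsto (fun n : ℕ => ((((n : ℝ) + 1) : ℝ) : 𝕜)⁻¹) atTop (nhds 0) := by
    simpa [Function.comp_def] using
      ((RCLike.continuous_ofReal (K := 𝕜)).tendsto 0).comp tendsto_one_div_add_atTop_nhds_zero_nat
  change Tendsto (fun n => ‖S n * (1 - σ k)‖) atTop (nhds 0)
  simp_rw [hS, smul_mul_assoc]
  simpa using (hinv.zero_smul_isBoundedUnder_le hsum.isBoundedUnder_le).norm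

/-- Let `X` be a normed vector space over `ℝ` or `ℂ` (a field `𝕜` satisfying
`RCLike 𝕜`), and `{σ_n}` pairwise commuting bounded operators on `X`, each of
operator norm at most `1`, with `σ_0 = id` and
`σ_1 ∘ σ_n = w σ_{n+1} + (1-w) σ_{n-1}` for `n ≥ 1`, where `1/2 < w < 1`.  With
`S_n = (1/(n+1)) Σ_{l=0}^n σ_l`, for every fixed `k ∈ ℤ_+` the operator norms
`‖S_n ∘ (id − σ_k)‖` converge to `0` as `n → ∞`. -/
theorem stmt11 (𝕜 : Type*) [RCLike 𝕜] (X : Type*) [NormedAddCommGroup X]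
    [NormedSpace 𝕜 X]
    (σ : ℕ → (X →L[𝕜] X)) (hcomm : ∀ m n : ℕ, Commute (σ m) (σ n)) (hσ₀ : σ 0 = 1)
    (hσ_norm : ∀ n : ℕ, ‖σ n‖ ≤ 1)
    (w : ℝ) (hw₁ : 1 / 2 < w) (hw₂ : w < 1)
    (hrec : ∀ n : ℕ, 1 ≤ n →
      σ 1 * σ n = (w : 𝕜) • σ (n + 1) + ((1 - w : ℝ) : 𝕜) • σ (n - 1))
    (S : ℕ → (X →L[𝕜] X))
    (hS : ∀ n : ℕ, S n = ((((n : ℝ) + 1) : ℝ) : 𝕜)⁻¹ • ∑ l ∈ Finset.range (n + 1), σ l) :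
    ∀ k : ℕ,
      Filter.Tendsto (fun n : ℕ => ‖(S n).comp (1 - σ k)‖) Filter.atTop (nhds 0) :=
  stmt11_general 𝕜 X σ hcomm hσ₀ hσ_norm w hw₁ hrec S hS
end

section
/- Let F_r be the free group on r ≥ 1 generators and let ℝ[F_r] be its real group algebra. For n ∈ ℕ define s_n = (1/|W_n|) Σ_{a ∈ W_n} a ∈ ℝ[F_r], where W_n is the set of elements of F_r of reduced word length n (so s_0 is the identity of ℝ[F_r]). Then, with w = (2r − 1)/(2r), for every n ≥ 1 one has s_1 · s_n = w · s_{n+1} + (1 − w) · s_{n−1} in ℝ[F_r]. -/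
/-!
Left multiplication by a letter changes the length of a reduced word by exactly one. A word of
length `m + 2` is, in exactly one way, a letter times a word of length `m + 1` without
cancellation. A product `x * a` with cancellation is determined by `c = x * a`, of length `m`,
and the letter `x`, which can be any letter with `|x⁻¹ c| = m + 1`: all `2r` letters if `c = 1`,
all but the first letter of `c` otherwise. Writing `d_m` for this count,
`S₁ S_{m+1} = S_{m+2} + d_m S_m` for the unnormalized sphere sums `S_n`. The augmentation
`ℕ[F_r] → ℕ` turns this into `|W₁| |W_{m+1}| = |W_{m+2}| + d_m |W_m|`, whence
`|W_{m+1}| = d_m |W_m|` by induction, and dividing by the cardinalities yields the recurrence.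
-/

/-- The normalized sum `s_n = (1/|W_n|) Σ_{a ∈ W_n} a` in the real group algebra
of the free group on `r` generators, where `W_n` is the (finite) set of elements
of reduced word length `n`. -/
noncomputable def sph (r n : ℕ) : MonoidAlgebra ℝ (FreeGroup (Fin r)) :=
  (({g : FreeGroup (Fin r) | g.toWord.length = n}).ncard : ℝ)⁻¹ •
    ∑ᶠ a ∈ {g : FreeGroup (Fin r) | g.toWord.length = n},
      MonoidAlgebra.of ℝ (FreeGroup (Fin r)) a

namespace FreeGroup

open Finset

def forwardDegree (α : Type*) [Fintype α] (m : ℕ) : ℕ :=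
  if m = 0 then 2 * Fintype.card α else 2 * Fintype.card α - 1

variable {α : Type*} [DecidableEq α]

theorem toWord_mk_singleton_mul (p : α × Bool) (g : FreeGroup α) :
    (mk [p] * g).toWord =
      if g.toWord.head? = some (p.1, !p.2) then g.toWord.tail else p :: g.toWord := by
  conv_lhs => rw [← mk_toWord (x := g)]
  rw [mul_mk, toWord_mk, List.singleton_append, reduce.cons, reduce_toWord]
  obtain ⟨a, b⟩ := p
  rcases g.toWord with _ | ⟨⟨c, d⟩, tl⟩
  · simp
  · cases b <;> cases d <;> simp [Prod.ext_iff, eq_comm, And.comm]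

theorem norm_mk_singleton_mul (p : α × Bool) (g : FreeGroup α) :
    (mk [p] * g).norm =
      if g.toWord.head? = some (p.1, !p.2) then g.norm - 1 else g.norm + 1 := by
  rw [norm, toWord_mk_singleton_mul]
  split <;> simp [norm]

theorem toWord_mk_singleton_mul_of_norm {p : α × Bool} {g : FreeGroup α}
    (h : (mk [p] * g).norm = g.norm + 1) : (mk [p] * g).toWord = p :: g.toWord := by
  rw [norm_mk_singleton_mul] at h
  rw [toWord_mk_singleton_mul, if_neg]
  intro hc
  rw [if_pos hc] at h
  omega

theorem norm_mk_singleton_mul_of_ne {p : α × Bool} {g : FreeGroup α}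
    (h : (mk [p] * g).norm ≠ g.norm + 1) : (mk [p] * g).norm = g.norm - 1 := by
  rw [norm_mk_singleton_mul] at h ⊢
  split_ifs at h ⊢ <;> omega

theorem mk_singleton_injective : Function.Injective (fun p : α × Bool ↦ mk [p]) := by
  intro p q h
  simpa using congrArg toWord h

theorem norm_eq_one_iff {x : FreeGroup α} : x.norm = 1 ↔ ∃ p, mk [p] = x := by
  refine ⟨fun h ↦ ?_, ?_⟩
  · obtain ⟨p, hp⟩ := List.length_eq_one_iff.mp h
    exact ⟨p, by rw [← hp, mk_toWord]⟩
  · rintro ⟨p, rfl⟩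
    simp [norm]

theorem exists_mk_singleton_mul_eq {x : FreeGroup α} (hx : x ≠ 1) :
    ∃ p y, (mk [p] * y).toWord = p :: y.toWord ∧ mk [p] * y = x := by
  obtain ⟨p, t, ht⟩ := List.exists_cons_of_ne_nil (mt toWord_eq_nil_iff.mp hx)
  have hred : reduce t = t :=
    ((isReduced_toWord (x := x)).infix ⟨[p], [], by simp [ht]⟩).reduce_eq
  have hmul : mk [p] * mk t = x := by rw [mul_mk, List.singleton_append, ← ht, mk_toWord]
  exact ⟨p, mk t, by rw [hmul, ht, toWord_mk, hred], hmul⟩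

section Sphere

theorem finite_setOf_norm_eq [Finite α] (n : ℕ) : {g : FreeGroup α | g.norm = n}.Finite :=
  (List.finite_length_eq _ n).preimage toWord_injective.injOn

variable (α) [Finite α]

noncomputable def sphere (n : ℕ) : Finset (FreeGroup α) := (finite_setOf_norm_eq n).toFinset

variable {α}

@[simp]
theorem mem_sphere {n : ℕ} {g : FreeGroup α} : g ∈ sphere α n ↔ g.norm = n := by
  simp [sphere]

theorem sphere_zero : sphere α 0 = {1} := by
  ext
  simp

variable (α) in
theorem sphere_nonempty [Nonempty α] (n : ℕ) : (sphere α n).Nonempty :=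
  ⟨_, mem_sphere.mpr (norm_surjective n).choose_spec⟩

end Sphere

variable [Fintype α]

theorem sum_sphere_one {M : Type*} [AddCommMonoid M] (f : FreeGroup α → M) :
    ∑ g ∈ sphere α 1, f g = ∑ p : α × Bool, f (mk [p]) := by
  have : sphere α 1 = univ.image (fun p : α × Bool ↦ mk [p]) := by
    ext
    simp [norm_eq_one_iff]
  rw [this, sum_image fun p _ q _ h ↦ mk_singleton_injective h]

theorem card_sphere_one : #(sphere α 1) = 2 * Fintype.card α := by
  rw [card_eq_sum_ones, sum_sphere_one]
  simp [mul_comm]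

theorem card_filter_norm_inv_mk_singleton_mul (c : FreeGroup α) :
    #{p | ((mk [p])⁻¹ * c).norm = c.norm + 1} = forwardDegree α c.norm := by
  have hnorm (p : α × Bool) : ((mk [p])⁻¹ * c).norm =
      if c.toWord.head? = some p then c.norm - 1 else c.norm + 1 := by
    rw [inv_mk, invRev, List.map_singleton, List.reverse_singleton, norm_mk_singleton_mul]
    simp
  simp only [hnorm, forwardDegree]
  rcases hc : c.toWord with _ | ⟨q, t⟩
  · have : c.norm = 0 := by simp [norm, hc]
    simp [this, mul_comm]
  · have : c.norm ≠ 0 := by simp [norm, hc]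
    simp [this, filter_ne, mul_comm]

section Sums

variable {M : Type*} [AddCommMonoid M]

theorem sum_filter_norm_mk_singleton_mul_eq (m : ℕ) (f : FreeGroup α → M) :
    ∑ q ∈ univ ×ˢ sphere α (m + 1) with (mk [q.1] * q.2).norm = m + 2, f (mk [q.1] * q.2) =
      ∑ g ∈ sphere α (m + 2), f g := by
  refine sum_bij (fun q _ ↦ mk [q.1] * q.2) (fun q hq ↦ ?_) ?_ (fun g hg ↦ ?_) fun _ _ ↦ rfl
  · exact mem_sphere.mpr (mem_filter.mp hq).2
  · rintro ⟨p, a⟩ ha ⟨p', a'⟩ ha' h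
    simp only [mem_filter, mem_product, mem_sphere] at ha ha' h
    have hword := congrArg toWord h
    rw [toWord_mk_singleton_mul_of_norm (p := p) (g := a) (by omega),
      toWord_mk_singleton_mul_of_norm (p := p') (g := a') (by omega),
      List.cons.injEq, toWord_inj] at hword
    rw [hword.1, hword.2]
  · rw [mem_sphere] at hg
    obtain ⟨p, y, hword, rfl⟩ := exists_mk_singleton_mul_eq (x := g) (by rintro rfl; simp at hg)
    have hy : y.norm = m + 1 := by
      have := congrArg List.length hword
      change (mk [p] * y).norm = y.norm + 1 at this
      omega
    exact ⟨(p, y), by simp [hy, hg], rfl⟩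

theorem sum_filter_norm_mk_singleton_mul_ne (m : ℕ) (f : FreeGroup α → M) :
    ∑ q ∈ univ ×ˢ sphere α (m + 1) with (mk [q.1] * q.2).norm ≠ m + 2, f (mk [q.1] * q.2) =
      forwardDegree α m • ∑ c ∈ sphere α m, f c := by
  calc _ = ∑ q ∈ sphere α m ×ˢ univ with ((mk [q.2])⁻¹ * q.1).norm = m + 1, f q.1 := by
        refine sum_nbij' (fun q ↦ (mk [q.1] * q.2, q.1)) (fun q ↦ (q.2, (mk [q.2])⁻¹ * q.1))
          ?_ ?_ ?_ ?_ fun _ _ ↦ rfl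
        · rintro ⟨p, a⟩ h
          simp only [mem_filter, mem_product, mem_sphere, mem_univ, and_true, true_and] at h ⊢
          rw [norm_mk_singleton_mul_of_ne (by rw [h.1]; exact h.2), h.1, inv_mul_cancel_left]
          exact ⟨rfl, h.1⟩
        · rintro ⟨c, p⟩ h
          simp only [mem_filter, mem_product, mem_sphere, mem_univ, and_true, true_and] at h ⊢
          rw [mul_inv_cancel_left, h.2]
          omega
        · rintro ⟨p, a⟩ _
          simp only [inv_mul_cancel_left]
        · rintro ⟨c, p⟩ _
          simp only [mul_inv_cancel_left]
    _ = ∑ c ∈ sphere α m, #{p | ((mk [p])⁻¹ * c).norm = m + 1} • f c := by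
        rw [sum_filter, sum_product]
        refine sum_congr rfl fun c _ ↦ ?_
        rw [← sum_filter]
        exact sum_const (f c)
    _ = forwardDegree α m • ∑ c ∈ sphere α m, f c := by
        rw [smul_sum]
        refine sum_congr rfl fun c hc ↦ ?_
        rw [← mem_sphere.mp hc, card_filter_norm_inv_mk_singleton_mul]

end Sums

section GroupAlgebra

variable (k : Type*)

noncomputable def sphereSum [Semiring k] (n : ℕ) : MonoidAlgebra k (FreeGroup α) :=
  ∑ g ∈ sphere α n, MonoidAlgebra.of k (FreeGroup α) g

theorem sphereSum_one_mul_sphereSum_succ [Semiring k] (m : ℕ) :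
    sphereSum k 1 * sphereSum k (m + 1) =
      sphereSum k (m + 2) + forwardDegree α m • sphereSum (α := α) k m := by
  rw [sphereSum, sum_sphere_one, sphereSum, sum_mul_sum, ← sum_product',
    ← sum_filter_add_sum_filter_not _ fun q ↦ (mk [q.1] * q.2).norm = m + 2]
  simp only [← _root_.map_mul]
  rw [sum_filter_norm_mk_singleton_mul_eq, sum_filter_norm_mk_singleton_mul_ne]
  rfl

theorem card_sphere_one_mul_card_sphere_succ (m : ℕ) :
    #(sphere α 1) * #(sphere α (m + 1)) =
      #(sphere α (m + 2)) + forwardDegree α m * #(sphere α m) := by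
  have augmentation (n : ℕ) :
      MonoidAlgebra.lift ℕ ℕ (FreeGroup α) 1 (sphereSum ℕ n) = #(sphere α n) := by
    simp [sphereSum]
  simpa [augmentation] using
    congrArg (MonoidAlgebra.lift ℕ ℕ (FreeGroup α) 1) (sphereSum_one_mul_sphereSum_succ ℕ m)

theorem card_sphere_succ (m : ℕ) :
    #(sphere α (m + 1)) = forwardDegree α m * #(sphere α m) := by
  induction m with
  | zero => simp [card_sphere_one, sphere_zero, forwardDegree]
  | succ m ih =>
    have h := card_sphere_one_mul_card_sphere_succ (α := α) m
    rw [card_sphere_one, ← ih] at h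
    rw [forwardDegree, if_neg m.add_one_ne_zero, Nat.sub_mul, one_mul, h, Nat.add_sub_cancel]

theorem card_sphere_add_two (m : ℕ) :
    #(sphere α (m + 2)) = (2 * Fintype.card α - 1) * #(sphere α (m + 1)) :=
  (card_sphere_succ (m + 1)).trans (by rw [forwardDegree, if_neg m.add_one_ne_zero])

noncomputable def sphereMean [DivisionSemiring k] (n : ℕ) : MonoidAlgebra k (FreeGroup α) :=
  (#(sphere α n) : k)⁻¹ • sphereSum k n

theorem sphereMean_one_mul_sphereMean_succ [Field k] [CharZero k] [Nonempty α] (m : ℕ) :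
    sphereMean k 1 * sphereMean k (m + 1) =
      ((2 * Fintype.card α - 1) / (2 * Fintype.card α) : k) • sphereMean k (m + 2) +
        (1 - (2 * Fintype.card α - 1) / (2 * Fintype.card α) : k) •
          sphereMean (α := α) k m := by
  have hletters : 1 ≤ 2 * Fintype.card α := by
    have := Fintype.card_pos (α := α)
    omega
  have hN : (#(sphere α m) : k) ≠ 0 := Nat.cast_ne_zero.mpr (sphere_nonempty α m).card_pos.ne'
  have hD : (forwardDegree α m : k) ≠ 0 := by
    have := (sphere_nonempty α (m + 1)).card_pos.ne'
    rw [card_sphere_succ] at this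
    exact Nat.cast_ne_zero.mpr (left_ne_zero_of_mul this)
  have h2r : (2 * Fintype.card α - 1 : k) ≠ 0 := by
    have : 2 * Fintype.card α - 1 ≠ 0 := by omega
    exact_mod_cast this
  simp only [sphereMean]
  rw [smul_mul_smul_comm, sphereSum_one_mul_sphereSum_succ, smul_add,
    ← Nat.cast_smul_eq_nsmul k, smul_smul, smul_smul, smul_smul, card_sphere_one,
    card_sphere_add_two, card_sphere_succ]
  push_cast [Nat.cast_sub hletters]
  congr 2
  · field_simp
  · field_simp
    ring

end GroupAlgebra

end FreeGroup

open FreeGroup in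
theorem sph_eq_sphereMean (r n : ℕ) : sph r n = sphereMean ℝ n := by
  have hfin : {g : FreeGroup (Fin r) | g.toWord.length = n}.Finite := finite_setOf_norm_eq n
  rw [sph, Set.ncard_eq_toFinset_card _ hfin, finsum_mem_eq_finite_toFinset_sum _ hfin]
  rfl

/-- In the real group algebra of the free group on `r ≥ 1` generators, the
normalized spherical sums `s_n` satisfy, with `w = (2r−1)/(2r)`,
`s_1 · s_n = w s_{n+1} + (1−w) s_{n−1}` for every `n ≥ 1`. -/
theorem stmt15 (r : ℕ) (hr : 1 ≤ r) :
    ∀ n : ℕ, 1 ≤ n →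
      sph r 1 * sph r n =
        ((2 * (r : ℝ) - 1) / (2 * (r : ℝ))) • sph r (n + 1) +
          (1 - (2 * (r : ℝ) - 1) / (2 * (r : ℝ))) • sph r (n - 1) := by
  intro n hn
  obtain ⟨m, rfl⟩ := Nat.exists_eq_add_of_le' hn
  have : Nonempty (Fin r) := ⟨⟨0, hr⟩⟩
  have h := FreeGroup.sphereMean_one_mul_sphereMean_succ (α := Fin r) ℝ m
  rw [Fintype.card_fin] at h
  simpa only [sph_eq_sphereMean, Nat.add_sub_cancel] using h
end
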